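/- For any subset K of components and any x ∈ 𝔹^n, there exists a unique smallest K-closed hypercube of f containing x, where 'smallest' is with respect to the subcube ordering. -/
import Mathlib


inductive PState : Type
  | zero | up | down | one
deriving DecidableEq

def PState.ofBool : Bool → PState
  | false => .zero
  | true  => .one

def PState.isBool (p : PState) : Prop := p = .zero ∨ p = .one

abbrev BN (n : ℕ) := (Fin n → Bool) → Fin n → Bool

def gamma {n : ℕ} (x : Fin n → PState) : Set (Fin n → Bool) :=
  {b | ∀ i (v : Bool), x i = PState.ofBool v → b i = v}

def mpStep {n : ℕ} (f : BN n) (x y : Fin n → PState) : Prop :=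
  ∃ i : Fin n, x i ≠ y i ∧ (∀ j, j ≠ i → x j = y j) ∧
    ((y i = .up ∧ x i ≠ .one ∧ ∃ z ∈ gamma x, f z i = true) ∨
     (y i = .one ∧ x i = .up) ∨
     (y i = .down ∧ x i ≠ .zero ∧ ∃ z ∈ gamma x, f z i = false) ∨
     (y i = .zero ∧ x i = .down))

def mpReachP {n : ℕ} (f : BN n) : (Fin n → PState) → (Fin n → PState) → Prop :=
  Relation.ReflTransGen (mpStep f)

def embed {n : ℕ} (x : Fin n → Bool) : Fin n → PState := fun i => PState.ofBool (x i)

def mpReach {n : ℕ} (f : BN n) (x : Fin n → Bool) : Set (Fin n → Bool) :=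
  {y | mpReachP f (embed x) (embed y)}

def cubeSet {n : ℕ} (h : Fin n → Option Bool) : Set (Fin n → Bool) :=
  {z | ∀ i b, h i = some b → z i = b}

def smaller {n : ℕ} (h h' : Fin n → Option Bool) : Prop :=
  ∀ i b, h' i = some b → h i = some b

def kClosed {n : ℕ} (f : BN n) (K : Finset (Fin n)) (h : Fin n → Option Bool) : Prop :=
  ∀ z ∈ cubeSet h, ∀ i ∈ K, h i = none ∨ h i = some (f z i)

def closedBy {n : ℕ} (f : BN n) (h : Fin n → Option Bool) : Prop :=
  ∀ z ∈ cubeSet h, f z ∈ cubeSet h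

def smallestClosed {n : ℕ} (f : BN n) (x : Fin n → Bool) (h : Fin n → Option Bool) : Prop :=
  x ∈ cubeSet h ∧ closedBy f h ∧
    ∀ h', x ∈ cubeSet h' → closedBy f h' → smaller h h'

def minClosed {n : ℕ} (f : BN n) (h : Fin n → Option Bool) : Prop :=
  closedBy f h ∧ ∀ h', closedBy f h' → smaller h' h → h' = h

def faStep {n : ℕ} (f : BN n) (x y : Fin n → Bool) : Prop :=
  ∃ i : Fin n, x i ≠ y i ∧ (∀ j, j ≠ i → x j = y j) ∧ y i = f x i

def aStep {n : ℕ} (f : BN n) (x y : Fin n → Bool) : Prop :=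
  x ≠ y ∧ ∀ i, x i ≠ y i → y i = f x i

def mnStep {n m : ℕ} (F : (Fin n → Fin (m+1)) → Fin n → ℤ)
    (x y : Fin n → Fin (m+1)) : Prop :=
  x ≠ y ∧ ∀ i, x i ≠ y i → ((y i : ℤ) = (x i : ℤ) + F x i)

def beta {n m : ℕ} (x : Fin n → Fin (m+1)) : Set (Fin n → Bool) :=
  {b | ∀ i, ((x i : ℕ) = 0 → b i = false) ∧ ((x i : ℕ) = m → b i = true)}

def refines {n m : ℕ} (F : (Fin n → Fin (m+1)) → Fin n → ℤ) (f : BN n) : Prop :=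
  ∀ x i, (F x i > 0 → ∃ b ∈ beta x, f b i = true) ∧
         (F x i < 0 → ∃ b ∈ beta x, f b i = false)

def alpha {n m : ℕ} (x : Fin n → Fin (m+1)) : Set (Fin n → PState) :=
  {p | ∀ i, ((x i : ℕ) = 0 ↔ p i = .zero) ∧ ((x i : ℕ) = m ↔ p i = .one)}

def bdStep {n : ℕ} (f : BN n) (L : Finset (Fin n)) (a b : Fin n → PState) : Prop :=
  mpStep f a b ∧ ∃ j, a j ≠ b j ∧ j ∉ L ∧ (a j).isBool ∧ ¬ (b j).isBool

def exhaustive {n : ℕ} (f : BN n) (x : Fin n → Bool) (L : Finset (Fin n))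
    (zhat : Fin n → PState) : Prop :=
  Relation.ReflTransGen (bdStep f L) (embed x) zhat ∧ ∀ z', ¬ bdStep f L zhat z'

theorem stmt3 {n : ℕ} (f : BN n) (K : Finset (Fin n)) (x : Fin n → Bool) :
    ∃! h : Fin n → Option Bool,
      x ∈ cubeSet h ∧ kClosed f K h ∧
        ∀ h', x ∈ cubeSet h' → kClosed f K h' → smaller h h' := by
  classical
  set Good : (Fin n → Option Bool) → Prop :=
    fun h' => x ∈ cubeSet h' ∧ kClosed f K h' with hGood
  set h : Fin n → Option Bool :=
    fun i => if ∃ h', Good h' ∧ h' i ≠ none then some (x i) else none with hdef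
  have hxmem : x ∈ cubeSet h := by
    intro i b hib
    simp only [hdef] at hib
    split at hib
    · exact Option.some_inj.mp hib
    · exact absurd hib (by simp)
  have hsmaller : ∀ h', Good h' → smaller h h' := by
    intro h' hg i b hib
    have hb : b = x i := (hg.1 i b hib).symm
    simp only [hdef]
    rw [if_pos ⟨h', hg, by simp [hib]⟩, hb]
  have hsub : ∀ h', Good h' → cubeSet h ⊆ cubeSet h' := by
    intro h' hg z hz i b hib
    exact hz i b (hsmaller h' hg i b hib)
  have hclosed : kClosed f K h := by
    intro z hz i hiK
    by_cases hc : ∃ h', Good h' ∧ h' i ≠ none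
    · obtain ⟨h', hg, hne⟩ := hc
      obtain ⟨b, hb⟩ := Option.ne_none_iff_exists'.mp hne
      have hbx : b = x i := (hg.1 i b hb).symm
      have := hg.2 z (hsub h' hg hz) i hiK
      rcases this with h1 | h1
      · exact absurd (hb.symm.trans h1) (by simp)
      · right
        have : b = f z i := Option.some_inj.mp (hb.symm.trans h1)
        simp only [hdef]
        rw [if_pos ⟨h', hg, by simp [hb]⟩, ← hbx, this]
    · left; simp only [hdef]; rw [if_neg hc]
  refine ⟨h, ⟨hxmem, hclosed, fun h' hx' hc' => hsmaller h' ⟨hx', hc'⟩⟩, ?_⟩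
  rintro g ⟨hgx, hgc, hgs⟩
  funext i
  have h1 := fun b => hgs h hxmem hclosed i b
  have h2 := fun b => hsmaller g ⟨hgx, hgc⟩ i b
  cases hgi : g i with
  | none =>
    cases hhi : h i with
    | none => rfl
    | some b => exact absurd ((h1 b hhi).symm.trans hgi) (by simp)
  | some b => exact (h2 b hgi).symm
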